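/- arXiv:2005.04859 — 2 statements merged into one kernel-verified Lean document; each statement's English description precedes it below -/
import Mathlib

section
/- Let N ≥ 2, suppose Ω∖cl(ω) satisfies the uniform interior sphere condition with radius r_i > 0 on Γ and Γ is of class C¹. Let v be harmonic in Ω∖cl(ω), of class C¹ on the closure of Ω^c_{r_i}, and let G be an upper bound for |∇v| on the closure of Ω^c_{r_i}. Then for every p ≥ 1 there exist positive constants a_{N,p} and α_{N,p}, depending only on N and p, such that if ‖v − v_{Ω∖cl(ω)}‖_{L^p(Ω∖cl(ω))} ≤ α_{N,p} r_i^{(N+p)/p} G, then max_Γ v − min_Γ v ≤ a_{N,p} G^{N/(N+p)} ‖v − v_{Ω∖cl(ω)}‖_{L^p(Ω∖cl(ω))}^{p/(N+p)}, where v_D := (1/|D|)∫_D v dx denotes the mean value of v over D. -/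
open MeasureTheory Metric Set Bornology
open scoped RealInnerProductSpace ENNReal Topology

noncomputable section

/-- The Hessian of `u` at `x`, as a bilinear expression: second derivative of `u`
first in direction `w`, then in direction `v`. -/
noncomputable def hessBil {N : ℕ} (u : EuclideanSpace ℝ (Fin N) → ℝ)
    (x v w : EuclideanSpace ℝ (Fin N)) : ℝ :=
  fderiv ℝ (fun y => fderiv ℝ u y w) x v

/-- The Laplacian of `u` at `x`: the trace of the Hessian. -/
noncomputable def lap {N : ℕ} (u : EuclideanSpace ℝ (Fin N) → ℝ)
    (x : EuclideanSpace ℝ (Fin N)) : ℝ :=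
  ∑ i, hessBil u x (EuclideanSpace.single i (1:ℝ)) (EuclideanSpace.single i (1:ℝ))

/-- The squared Frobenius norm `|∇²u|²` of the Hessian of `u` at `x`. -/
noncomputable def hessFrobSq {N : ℕ} (u : EuclideanSpace ℝ (Fin N) → ℝ)
    (x : EuclideanSpace ℝ (Fin N)) : ℝ :=
  ∑ i, ∑ j, (hessBil u x (EuclideanSpace.single i (1:ℝ)) (EuclideanSpace.single j (1:ℝ)))^2

/-- `ν` is a continuous outward unit normal field for the domain `D` along the part `S`
of its boundary (this encodes the `C¹` regularity of that part of the boundary). -/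
def IsOutwardNormalOn {N : ℕ} (D S : Set (EuclideanSpace ℝ (Fin N)))
    (ν : EuclideanSpace ℝ (Fin N) → EuclideanSpace ℝ (Fin N)) : Prop :=
  ContinuousOn ν S ∧ ∀ p ∈ S, ‖ν p‖ = 1 ∧
    ∀ᶠ t in 𝓝[>] (0:ℝ), p - t • ν p ∈ D ∧ p + t • ν p ∉ closure D

/-- The uniform interior sphere condition, with radius `r`, for the domain `D` with
boundary `Bdry`, at each point of `S ⊆ Bdry`: for each `p ∈ S` there is an open ball of
radius `r` contained in `D` whose closure meets `Bdry` only at `p`. -/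
def UnifIntSphere {N : ℕ} (D Bdry S : Set (EuclideanSpace ℝ (Fin N))) (r : ℝ) : Prop :=
  ∀ p ∈ S, ∃ y : EuclideanSpace ℝ (Fin N),
    ball y r ⊆ D ∧ closedBall y r ∩ Bdry = {p}

/-!
Fix `q ∈ Γ` and `σ ≤ r_i / 2`. Inside the interior ball at `q` sits a ball `B` of radius `σ`
whose closure contains `q` and lies in the closure of `Ω^c_{r_i}`, so `|v q - v x| ≤ 2σG` on `B`,
and by Chebyshev some `x ∈ B` has `|v x - v_D|^p ≤ ‖v - v_D‖_p^p / |B|`. Hence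
`|v q - v_D| ≤ 2σG + (σ^N |B₁|)^{-1/p} ‖v - v_D‖_p`, and `σ = (‖v - v_D‖_p / G)^{p/(N+p)}` balances
the two terms; the smallness assumption on `‖v - v_D‖_p` says exactly that this `σ` is `≤ r_i / 2`.
-/

open Filter Module Topology

lemma sSup_image_sub_sInf_image_le {X : Type*} {s : Set X} {v : X → ℝ} {m B : ℝ}
    (hs : s.Nonempty) (h : ∀ q ∈ s, |v q - m| ≤ B) :
    sSup (v '' s) - sInf (v '' s) ≤ 2 * B := by
  have hsup : sSup (v '' s) ≤ m + B :=
    csSup_le (hs.image v) <| forall_mem_image.2 fun q hq => by linarith [(abs_le.1 (h q hq)).2]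
  have hinf : m - B ≤ sInf (v '' s) :=
    le_csInf (hs.image v) <| forall_mem_image.2 fun q hq => by linarith [(abs_le.1 (h q hq)).1]
  linarith

lemma Bornology.IsBounded.frontier_nonempty {E : Type*} [NormedAddCommGroup E] [NormedSpace ℝ E]
    [Nontrivial E] {s : Set E} (hb : IsBounded s) (hs : s.Nonempty) : (frontier s).Nonempty :=
  nonempty_frontier_iff.2 ⟨hs, fun h => NormedSpace.unbounded_univ ℝ E (h ▸ hb)⟩

lemma UnifIntSphere.exists_dist_eq {N : ℕ} {D Ω B : Set (EuclideanSpace ℝ (Fin N))} {r : ℝ}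
    (h : UnifIntSphere D (frontier Ω ∪ B) (frontier Ω) r) (hΩ : IsOpen Ω) (hD : D ⊆ Ω)
    {q : EuclideanSpace ℝ (Fin N)} (hq : q ∈ frontier Ω) :
    ∃ y, ball y r ⊆ D ∧ dist q y = r := by
  obtain ⟨y, hball, hcap⟩ := h q hq
  have hqy : dist q y ≤ r := (hcap.symm.subset rfl).1
  have hqΩ : q ∉ Ω := fun h => (hΩ.frontier_eq ▸ hq).2 h
  exact ⟨y, hball, hqy.antisymm (not_lt.1 fun hlt => hqΩ (hD (hball hlt)))⟩

section

variable {E : Type*} [NormedAddCommGroup E] [NormedSpace ℝ E]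

lemma exists_ball_subset_ball_of_dist_eq {y q : E} {r σ : ℝ} (hr : 0 < r) (hσ : 0 ≤ σ)
    (hσr : σ ≤ r) (hq : dist q y = r) : ∃ c, dist q c = σ ∧ ball c σ ⊆ ball y r := by
  have hσr' : σ / r ≤ 1 := (div_le_one hr).2 hσr
  refine ⟨AffineMap.lineMap q y (σ / r), ?_, ball_subset_ball' ?_⟩
  · rw [dist_left_lineMap, hq, Real.norm_of_nonneg (by positivity), div_mul_cancel₀ _ hr.ne']
  · rw [dist_lineMap_right, hq, Real.norm_of_nonneg (by linarith), sub_mul,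
      div_mul_cancel₀ _ hr.ne']
    linarith

variable [FiniteDimensional ℝ E] [MeasurableSpace E] [BorelSpace E] (μ : Measure E)
  [μ.IsAddHaarMeasure]

lemma exists_mem_ball_abs_le_setIntegral_rpow {f : E → ℝ} {S : Set E} {c : E} {σ p : ℝ}
    (hσ : 0 < σ) (hp : 0 < p) (hS : ball c σ ⊆ S) (hf : IntegrableOn (fun x => |f x| ^ p) S μ) :
    ∃ x ∈ ball c σ,
      |f x| ≤ ((σ ^ finrank ℝ E * μ.real (ball 0 1))⁻¹ * ∫ x in S, |f x| ^ p ∂μ) ^ (1 / p) := by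
  obtain ⟨x, hx, havg⟩ := exists_le_setAverage (measure_ball_pos μ c hσ).ne'
    measure_ball_lt_top.ne (hf.mono_set hS)
  have hvol : μ.real (ball c σ) = σ ^ finrank ℝ E * μ.real (ball 0 1) := by
    rw [measureReal_def, measureReal_def, μ.addHaar_ball_of_pos c hσ, ENNReal.toReal_mul,
      ENNReal.toReal_ofReal (by positivity)]
  have hmono : ⨍ x in ball c σ, |f x| ^ p ∂μ ≤
      (σ ^ finrank ℝ E * μ.real (ball 0 1))⁻¹ * ∫ x in S, |f x| ^ p ∂μ := by
    rw [setAverage_eq, hvol, smul_eq_mul]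
    exact mul_le_mul_of_nonneg_left (setIntegral_mono_set hf
      (ae_of_all _ fun _ => by positivity) hS.eventuallyLE) (by positivity)
  refine ⟨x, hx, ?_⟩
  calc |f x| = (|f x| ^ p) ^ (1 / p) := by rw [one_div, Real.rpow_rpow_inv (abs_nonneg _) hp.ne']
    _ ≤ _ := Real.rpow_le_rpow (by positivity) (havg.trans hmono) (by positivity)

lemma abs_sub_le_of_ball_subset {v : E → ℝ} {S : Set E} {c q : E} {σ p G m : ℝ}
    (hσ : 0 < σ) (hp : 0 < p) (hS : ball c σ ⊆ S) (hq : q ∈ closedBall c σ)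
    (hv : ∀ z ∈ closedBall c σ, DifferentiableAt ℝ v z)
    (hG : ∀ z ∈ closedBall c σ, ‖fderiv ℝ v z‖ ≤ G)
    (hint : IntegrableOn (fun x => |v x - m| ^ p) S μ) :
    |v q - m| ≤ 2 * σ * G +
      ((σ ^ finrank ℝ E * μ.real (ball 0 1))⁻¹ * ∫ x in S, |v x - m| ^ p ∂μ) ^ (1 / p) := by
  obtain ⟨x, hx, hxm⟩ := exists_mem_ball_abs_le_setIntegral_rpow μ hσ hp hS hint
  have hx' : x ∈ closedBall c σ := ball_subset_closedBall hx
  have hqx : ‖q - x‖ ≤ 2 * σ := by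
    rw [← dist_eq_norm]
    linarith [dist_triangle_right q x c, mem_closedBall.1 hq, mem_closedBall.1 hx']
  have hG0 : 0 ≤ G := (norm_nonneg _).trans (hG c (mem_closedBall_self hσ.le))
  have hmvt : |v q - v x| ≤ 2 * σ * G := calc
    |v q - v x| ≤ G * ‖q - x‖ :=
      (convex_closedBall c σ).norm_image_sub_le_of_norm_fderiv_le hv hG hx' hq
    _ ≤ 2 * σ * G := by nlinarith
  linarith [abs_sub_le (v q) (v x) m]

lemma abs_sub_le_of_mem_frontier {Ω S : Set E} {v : E → ℝ} {r σ p G m : ℝ} (hσ : 0 < σ)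
    (hσr : σ ≤ r / 2) (hp : 0 < p) (hSΩ : S ⊆ Ω)
    (hsphere : ∀ q ∈ frontier Ω, ∃ y, ball y r ⊆ S ∧ dist q y = r) (hv : Differentiable ℝ v)
    (hG : ∀ x ∈ closure {y ∈ Ω | infDist y (frontier Ω) < r}, ‖fderiv ℝ v x‖ ≤ G)
    (hint : IntegrableOn (fun x => |v x - m| ^ p) S μ) {q : E} (hq : q ∈ frontier Ω) :
    |v q - m| ≤ 2 * σ * G +
      ((σ ^ finrank ℝ E * μ.real (ball 0 1))⁻¹ * ∫ x in S, |v x - m| ^ p ∂μ) ^ (1 / p) := by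
  obtain ⟨y, hyS, hqy⟩ := hsphere q hq
  obtain ⟨c, hqc, hcy⟩ :=
    exists_ball_subset_ball_of_dist_eq (by linarith) hσ.le (by linarith) hqy
  have hnear : closedBall c σ ⊆ closure {y ∈ Ω | infDist y (frontier Ω) < r} := by
    rw [← closure_ball c hσ.ne']
    refine closure_mono fun z hz => ⟨hSΩ (hyS (hcy hz)), ?_⟩
    calc infDist z (frontier Ω) ≤ dist z q := infDist_le_dist_of_mem hq
      _ ≤ dist z c + dist q c := dist_triangle_right z q c
      _ < r := by rw [hqc]; linarith [mem_ball.1 hz]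
  exact abs_sub_le_of_ball_subset μ hσ hp (hcy.trans hyS) (mem_closedBall.2 hqc.le)
    (fun z _ => hv z) (fun z hz => hG z (hnear hz)) hint

end

lemma nonpos_of_forall_le_mul {x C ρ : ℝ} (hρ : 0 < ρ)
    (h : ∀ σ, 0 < σ → σ ≤ ρ → x ≤ σ * C) : x ≤ 0 := by
  have hlim : Tendsto (fun σ => σ * C) (𝓝[>] 0) (𝓝 0) :=
    ((continuous_mul_const C).tendsto' 0 0 (zero_mul C)).mono_left nhdsWithin_le_nhds
  exact ge_of_tendsto hlim <| eventually_of_mem (Ioc_mem_nhdsGT hρ) fun σ hσ => h σ hσ.1 hσ.2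

lemma two_mul_mul_add_rpow_eq_of_eq_mul_rpow {n : ℕ} {p η G σ W : ℝ} (hp : 0 < p) (hG : 0 < G)
    (hσ : 0 < σ) (hW : 0 < W) (hη : η = G * σ ^ ((n + p) / p)) :
    2 * σ * G + ((σ ^ n * W)⁻¹ * η ^ p) ^ (1 / p) =
      (2 + W ^ (-(1 / p))) * G ^ (n / (n + p)) * η ^ (p / (n + p)) := by
  have hs : 0 < (n + p : ℝ) := by positivity
  have h1 : G ^ (n / (n + p)) * η ^ (p / (n + p)) = σ * G := calc
    G ^ (n / (n + p)) * η ^ (p / (n + p)) = G ^ (n / (n + p)) * (G ^ (p / (n + p)) * σ) := by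
      rw [hη, Real.mul_rpow hG.le (by positivity), ← Real.rpow_mul hσ.le, div_mul_div_comm,
        mul_comm (n + p : ℝ) p, div_self (by positivity), Real.rpow_one]
    _ = G ^ ((n + p) / (n + p)) * σ := by rw [add_div, Real.rpow_add hG]; ring
    _ = σ * G := by rw [div_self hs.ne', Real.rpow_one, mul_comm]
  have hηp : η ^ p = σ ^ n * (σ * G) ^ p := by
    rw [hη, Real.mul_rpow hG.le (by positivity), ← Real.rpow_mul hσ.le, div_mul_cancel₀ _ hp.ne',
      Real.rpow_add hσ, Real.rpow_natCast, Real.mul_rpow hσ.le hG.le]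
    ring
  have h2 : ((σ ^ n * W)⁻¹ * η ^ p) ^ (1 / p) = W ^ (-(1 / p)) * (σ * G) := by
    have hbase : (σ ^ n * W)⁻¹ * η ^ p = W⁻¹ * (σ * G) ^ p := by
      rw [hηp]; field_simp
    rw [hbase, Real.mul_rpow (by positivity) (by positivity), Real.inv_rpow hW.le,
      Real.rpow_neg hW.le, ← Real.rpow_mul (by positivity), mul_one_div_cancel hp.ne',
      Real.rpow_one]
  rw [mul_assoc (2 + _), h1, h2]
  ring

lemma le_mul_rpow_mul_rpow_of_forall_radius {x I G r W p : ℝ} {n : ℕ} (hp : 0 < p) (hr : 0 < r)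
    (hW : 0 < W) (hI : 0 ≤ I)
    (hsmall : I ^ (1 / p) ≤ (1 / 2) ^ ((n + p) / p) * r ^ ((n + p) / p) * G)
    (h : ∀ σ, 0 < σ → σ ≤ r / 2 → x ≤ 2 * σ * G + ((σ ^ n * W)⁻¹ * I) ^ (1 / p)) :
    x ≤ (2 + W ^ (-(1 / p))) * G ^ (n / (n + p)) * (I ^ (1 / p)) ^ (p / (n + p)) := by
  have hs : 0 < (n + p : ℝ) := by positivity
  rcases hI.eq_or_lt with rfl | hIpos
  · have hx : x ≤ 0 := nonpos_of_forall_le_mul (C := 2 * G) (half_pos hr) fun σ hσ hσr => by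
      have := h σ hσ hσr
      rw [mul_zero, Real.zero_rpow (one_div_ne_zero hp.ne')] at this
      linarith
    rwa [Real.zero_rpow (one_div_ne_zero hp.ne'), Real.zero_rpow (div_ne_zero hp.ne' hs.ne'),
      mul_zero]
  set η := I ^ (1 / p) with hη_def
  have hη : 0 < η := Real.rpow_pos_of_pos hIpos _
  have hG : 0 < G := by
    by_contra! hG
    have : 0 < (1 / 2 : ℝ) ^ ((n + p) / p) * r ^ ((n + p) / p) := by positivity
    nlinarith
  set σ := (η / G) ^ (p / (n + p))
  have hσ : 0 < σ := by positivity
  have hση : σ ^ ((n + p) / p) = η / G := by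
    rw [← Real.rpow_mul (by positivity), div_mul_div_comm, mul_comm p, div_self (by positivity),
      Real.rpow_one]
  have hσr : σ ≤ r / 2 := by
    rw [← Real.rpow_le_rpow_iff hσ.le (by positivity) (by positivity : 0 < (n + p) / p),
      div_eq_inv_mul r, Real.mul_rpow (by norm_num) hr.le, hση, div_le_iff₀ hG]
    simpa only [one_div] using hsmall
  have hI : I = η ^ p := by
    rw [hη_def, ← Real.rpow_mul hI, one_div_mul_cancel hp.ne', Real.rpow_one]
  refine (h σ hσ hσr).trans_eq ?_
  rw [hI, two_mul_mul_add_rpow_eq_of_eq_mul_rpow hp hG hσ hW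
    (by rw [hση, mul_div_cancel₀ _ hG.ne'])]

/-- the oscillation estimate of Lemma 5.4 of the paper: there are
constants `a_{N,p}, α_{N,p} > 0`, depending only on `N` and `p`, controlling
`max_Γ v - min_Γ v` by the `L^p`-deviation of `v` from its mean. -/
theorem stmt_11 (N : ℕ) (hN : 2 ≤ N) (p : ℝ) (hp : 1 ≤ p) :
    ∃ a > 0, ∃ α > 0, ∀ (Ω ω : Set (EuclideanSpace ℝ (Fin N)))
      (v : EuclideanSpace ℝ (Fin N) → ℝ) (r_i G : ℝ),
      0 < r_i →
      IsOpen Ω → IsConnected Ω → IsBounded Ω →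
      IsOpen ω → closure ω ⊆ Ω → IsConnected (Ω \ closure ω) →
      -- uniform interior sphere condition of radius r_i on Γ
      UnifIntSphere (Ω \ closure ω) (frontier Ω ∪ frontier ω) (frontier Ω) r_i →
      -- Γ is of class C¹
      (∃ ν : EuclideanSpace ℝ (Fin N) → EuclideanSpace ℝ (Fin N),
        IsOutwardNormalOn (Ω \ closure ω) (frontier Ω) ν) →
      -- v is harmonic in Ω ∖ cl(ω) and of class C¹ on cl(Ω^c_{r_i})
      ContDiff ℝ 1 v →
      ContDiffOn ℝ 2 v (Ω \ closure ω) →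
      (∀ x ∈ Ω \ closure ω, lap v x = 0) →
      -- G is an upper bound for |∇v| on cl(Ω^c_{r_i})
      (∀ x ∈ closure {y ∈ Ω | infDist y (frontier Ω) < r_i}, ‖gradient v x‖ ≤ G) →
      -- smallness condition on ‖v - v_{Ω∖cl(ω)}‖_{L^p(Ω∖cl(ω))}
      ((∫ x in Ω \ closure ω,
          |v x - ((volume (Ω \ closure ω)).toReal)⁻¹ * ∫ y in Ω \ closure ω, v y| ^ p)
            ^ (1/p) ≤ α * r_i ^ (((N : ℝ) + p) / p) * G) →
      sSup (v '' frontier Ω) - sInf (v '' frontier Ω) ≤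
        a * G ^ ((N : ℝ) / ((N : ℝ) + p)) *
          ((∫ x in Ω \ closure ω,
            |v x - ((volume (Ω \ closure ω)).toReal)⁻¹ * ∫ y in Ω \ closure ω, v y| ^ p)
              ^ (1/p)) ^ (p / ((N : ℝ) + p)) := by
  have hp0 : 0 < p := by linarith
  have : Nonempty (Fin N) := ⟨⟨0, by omega⟩⟩
  set W := volume.real (ball (0 : EuclideanSpace ℝ (Fin N)) 1)
  have hW : 0 < W :=
    ENNReal.toReal_pos (measure_ball_pos volume _ one_pos).ne' measure_ball_lt_top.ne
  refine ⟨2 * (2 + W ^ (-(1 / p))), by positivity, (1 / 2) ^ ((N + p) / p), by positivity, ?_⟩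
  intro Ω ω v r G hr hΩo hΩc hΩb _ _ _ hsph _ hv _ _ hG hsmall
  set S := Ω \ closure ω
  set m := ((volume S).toReal)⁻¹ * ∫ y in S, v y
  have hSΩ : S ⊆ Ω := sdiff_subset
  have hint : IntegrableOn (fun x => |v x - m| ^ p) S :=
    (((hv.continuous.sub continuous_const).abs.rpow_const fun _ => Or.inr hp0.le).continuousOn
      |>.integrableOn_compact hΩb.isCompact_closure).mono_set (hSΩ.trans subset_closure)
  have hbound : ∀ σ, 0 < σ → σ ≤ r / 2 → ∀ q ∈ frontier Ω,
      |v q - m| ≤ 2 * σ * G + ((σ ^ N * W)⁻¹ * ∫ x in S, |v x - m| ^ p) ^ (1 / p) := by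
    intro σ hσ hσr q hq
    simpa using abs_sub_le_of_mem_frontier volume hσ hσr hp0 hSΩ
      (fun q hq => hsph.exists_dist_eq hΩo hSΩ hq) (hv.differentiable one_ne_zero)
      (fun x hx => by simpa [gradient] using hG x hx) hint hq
  refine (sSup_image_sub_sInf_image_le (hΩb.frontier_nonempty hΩc.nonempty) fun q hq =>
    le_mul_rpow_mul_rpow_of_forall_radius hp0 hr hW
      (setIntegral_nonneg (hΩo.sdiff isClosed_closure).measurableSet fun _ _ => by positivity)
      hsmall fun σ hσ hσr => hbound σ hσ hσr q hq).trans_eq (by ring)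
end
end

section
/- Suppose Ω∖cl(ω) satisfies the uniform interior sphere condition with radius r_i > 0 on Γ, i.e., for each p ∈ Γ there exists an open ball of radius r_i contained in Ω∖cl(ω) whose closure intersects Γ ∪ ∂ω only at p. Then the complementary parallel set Ω^c_{r_i} := {y ∈ Ω : dist(y, Γ) < r_i} satisfies the interior sphere condition with radius r_i/2: for every point p of the boundary ∂Ω^c_{r_i} there exists an open ball of radius r_i/2 contained in Ω^c_{r_i} whose closure contains p. -/
open MeasureTheory Metric Set Bornology
open scoped RealInnerProductSpace ENNReal Topology

noncomputable section

/-!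
Write `D` for the complementary parallel set and `Γ = ∂Ω`. A boundary point `p` of `D` either lies
in `Ω` at distance exactly `r` from `Γ`, or lies on `Γ`. In the first case the ball of radius `r`
about `p` is connected, meets `Ω` and misses `Γ`, hence lies in `Ω`, and `p` has a nearest point
`q ∈ Γ` with `|p - q| = r`; in the second case the interior sphere condition gives a ball
`B(y, r) ⊆ Ω` with `|y - p| = r`. Either way we have two points `a`, `q` with `B(a, r) ⊆ Ω`,
`q ∈ Γ` and `|a - q| ≤ r`, and the ball of radius `r/2` about their midpoint lies in
`B(a, r) ∩ B(q, r) ⊆ D` and touches `p`.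
-/

section Midpoint

variable {E : Type*} [NormedAddCommGroup E] [NormedSpace ℝ E] {a b : E} {r : ℝ}

lemma dist_midpoint_left_le (h : dist a b ≤ r) : dist (midpoint ℝ a b) a ≤ r / 2 := by
  rw [dist_midpoint_left, Real.norm_two]
  linarith

lemma ball_midpoint_subset_ball_left (h : dist a b ≤ r) :
    ball (midpoint ℝ a b) (r / 2) ⊆ ball a r := fun x hx =>
  (dist_triangle x _ a).trans_lt (by linarith [mem_ball.1 hx, dist_midpoint_left_le h])

lemma ball_midpoint_subset_ball_right (h : dist a b ≤ r) :
    ball (midpoint ℝ a b) (r / 2) ⊆ ball b r := by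
  rw [midpoint_comm]
  exact ball_midpoint_subset_ball_left (dist_comm a b ▸ h)

lemma left_mem_closedBall_midpoint (h : dist a b ≤ r) : a ∈ closedBall (midpoint ℝ a b) (r / 2) :=
  mem_closedBall'.2 (dist_midpoint_left_le h)

lemma right_mem_closedBall_midpoint (h : dist a b ≤ r) : b ∈ closedBall (midpoint ℝ a b) (r / 2) := by
  rw [midpoint_comm]
  exact left_mem_closedBall_midpoint (dist_comm a b ▸ h)

end Midpoint

/-- The paper's `Ω^c_σ`. -/
def complParallelSet {α : Type*} [PseudoMetricSpace α] (Ω : Set α) (σ : ℝ) : Set α :=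
  {y ∈ Ω | infDist y (frontier Ω) < σ}

section ComplParallelSet

variable {α : Type*} [PseudoMetricSpace α] {Ω : Set α} {σ : ℝ} {p : α}

lemma isOpen_complParallelSet (hΩ : IsOpen Ω) : IsOpen (complParallelSet Ω σ) :=
  hΩ.inter (isOpen_lt (continuous_infDist_pt _) continuous_const)

lemma mem_frontier_complParallelSet (hΩ : IsOpen Ω) (hp : p ∈ frontier (complParallelSet Ω σ)) :
    (p ∈ Ω ∧ infDist p (frontier Ω) = σ) ∨ p ∈ frontier Ω := by
  rw [(isOpen_complParallelSet hΩ).frontier_eq] at hp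
  obtain ⟨hp_closure, hp_not_mem⟩ := hp
  by_cases hpΩ : p ∈ Ω
  · have h_le : infDist p (frontier Ω) ≤ σ :=
      closure_lt_subset_le (continuous_infDist_pt _) continuous_const
        (closure_mono (fun _ hy => hy.2) hp_closure)
    exact Or.inl ⟨hpΩ, h_le.antisymm (not_lt.1 fun h => hp_not_mem ⟨hpΩ, h⟩)⟩
  · rw [hΩ.frontier_eq]
    exact Or.inr ⟨closure_mono (fun _ hy => hy.1) hp_closure, hpΩ⟩

end ComplParallelSet

variable {E : Type*} [NormedAddCommGroup E] [NormedSpace ℝ E] {Ω : Set E} {a q : E} {r : ℝ}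

lemma ball_subset_of_le_infDist_frontier (hΩ : IsOpen Ω) (ha : a ∈ Ω)
    (hr : r ≤ infDist a (frontier Ω)) : ball a r ⊆ Ω := by
  rcases le_or_gt r 0 with hr₀ | hr₀
  · simp [ball_eq_empty.2 hr₀]
  refine (convex_ball a r).isPreconnected.subset_of_closure_inter_subset hΩ
    ⟨a, mem_ball_self hr₀, ha⟩ ?_
  rintro x ⟨hx_closure, hx_ball⟩
  by_contra hxΩ
  have hx_frontier : x ∈ frontier Ω := hΩ.frontier_eq ▸ ⟨hx_closure, hxΩ⟩
  linarith [infDist_le_dist_of_mem (x := a) hx_frontier, mem_ball'.1 hx_ball]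

lemma ball_midpoint_subset_complParallelSet (ha : ball a r ⊆ Ω) (hq : q ∈ frontier Ω)
    (haq : dist a q ≤ r) : ball (midpoint ℝ a q) (r / 2) ⊆ complParallelSet Ω r := fun _ hx =>
  ⟨ha (ball_midpoint_subset_ball_left haq hx),
    (infDist_le_dist_of_mem hq).trans_lt (ball_midpoint_subset_ball_right haq hx)⟩

theorem stmt_18_general (N : ℕ)
    (Ω ω : Set (EuclideanSpace ℝ (Fin N))) (r_i : ℝ) (hri : 0 < r_i)
    (hΩo : IsOpen Ω)
    -- uniform interior sphere condition of radius r_i on Γ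
    (hsphere : UnifIntSphere (Ω \ closure ω) (frontier Ω ∪ frontier ω) (frontier Ω) r_i) :
    ∀ p ∈ frontier {y ∈ Ω | infDist y (frontier Ω) < r_i},
      ∃ y : EuclideanSpace ℝ (Fin N),
        ball y (r_i / 2) ⊆ {y ∈ Ω | infDist y (frontier Ω) < r_i} ∧
        p ∈ closedBall y (r_i / 2) := by
  intro p hp
  rcases mem_frontier_complParallelSet hΩo hp with ⟨hpΩ, hp_dist⟩ | hpΓ
  · have hΓ : (frontier Ω).Nonempty := nonempty_iff_ne_empty.2 fun h => by
      rw [h, infDist_empty] at hp_dist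
      linarith
    obtain ⟨q, hq, hpq⟩ := isClosed_frontier.exists_infDist_eq_dist hΓ p
    have hpq_le : dist p q ≤ r_i := (hpq.symm.trans hp_dist).le
    exact ⟨midpoint ℝ p q,
      ball_midpoint_subset_complParallelSet
        (ball_subset_of_le_infDist_frontier hΩo hpΩ hp_dist.ge) hq hpq_le,
      left_mem_closedBall_midpoint hpq_le⟩
  · obtain ⟨y, hy_ball, hy_touch⟩ := hsphere p hpΓ
    have hyp : dist y p ≤ r_i := mem_closedBall'.1 (hy_touch.symm.subset rfl).1
    exact ⟨midpoint ℝ y p,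
      ball_midpoint_subset_complParallelSet (hy_ball.trans sdiff_subset) hpΓ hyp,
      right_mem_closedBall_midpoint hyp⟩

/-- the complementary parallel set `Ω^c_{r_i}` satisfies the interior
sphere condition with radius `r_i/2` (Lemma 7.11 of the paper). -/
theorem stmt_18 (N : ℕ) (hN : 2 ≤ N)
    (Ω ω : Set (EuclideanSpace ℝ (Fin N))) (r_i : ℝ) (hri : 0 < r_i)
    (hΩo : IsOpen Ω) (hΩconn : IsConnected Ω) (hΩb : IsBounded Ω)
    (hωo : IsOpen ω) (hωΩ : closure ω ⊆ Ω)
    -- uniform interior sphere condition of radius r_i on Γ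
    (hsphere : UnifIntSphere (Ω \ closure ω) (frontier Ω ∪ frontier ω) (frontier Ω) r_i) :
    ∀ p ∈ frontier {y ∈ Ω | infDist y (frontier Ω) < r_i},
      ∃ y : EuclideanSpace ℝ (Fin N),
        ball y (r_i / 2) ⊆ {y ∈ Ω | infDist y (frontier Ω) < r_i} ∧
        p ∈ closedBall y (r_i / 2) :=
  stmt_18_general N Ω ω r_i hri hΩo hsphere
end
end
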